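/- arXiv:1504.01045 — 6 statements merged into one kernel-verified Lean document; each statement's English description precedes it below -/
import Mathlib

section
/- Let a > 0 with λ ≥ a. Then for all real numbers t > M ≥ λ², the set B^t := {f ∈ L : M ≤ ‖f‖² ≤ t} is finite and satisfies #B^t ≤ (2√t/a + 1)⁴ − (2√M/a − 1)⁴. -/
/-!
Distinct lattice vectors are at distance at least `λ ≥ a`, so the open balls of radius `a / 2`
around the points of `B^t` are disjoint. They lie in the annulus `√M - a/2 < ‖y‖ ≤ √t + a/2`, and
comparing volumes (both scale like the fourth power of the radius) gives
`#B^t · (a/2)⁴ ≤ (√t + a/2)⁴ - (√M - a/2)⁴`.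
-/

open MeasureTheory Metric Module

section Packing

variable {E : Type*} [NormedAddCommGroup E]

theorem ball_subset_closedBall_diff_closedBall {x : E} {ρ r R : ℝ} (hr : r ≤ ‖x‖)
    (hR : ‖x‖ ≤ R) : ball x ρ ⊆ closedBall 0 (R + ρ) \ closedBall 0 (r - ρ) := by
  intro y hy
  rw [mem_ball, dist_eq_norm] at hy
  simp only [Set.mem_sdiff, mem_closedBall, dist_zero_right, not_le]
  constructor
  · linarith [norm_le_norm_add_norm_sub' y x]
  · linarith [norm_le_norm_add_norm_sub' x y, norm_sub_rev x y]

variable [NormedSpace ℝ E] [FiniteDimensional ℝ E]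

theorem MeasureTheory.Measure.addHaar_closedBall_diff_closedBall [MeasurableSpace E] [BorelSpace E]
    (μ : Measure E) [μ.IsAddHaarMeasure] (x : E) {r R : ℝ} (hr : 0 ≤ r) (hrR : r ≤ R) :
    μ (closedBall x R \ closedBall x r) =
      ENNReal.ofReal (R ^ finrank ℝ E - r ^ finrank ℝ E) * μ (ball 0 1) := by
  rw [measure_sdiff (closedBall_subset_closedBall hrR) measurableSet_closedBall.nullMeasurableSet
    measure_closedBall_lt_top.ne, Measure.addHaar_closedBall μ x (hr.trans hrR),
    Measure.addHaar_closedBall μ x hr, ← ENNReal.sub_mul fun _ _ => measure_ball_lt_top.ne,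
    ENNReal.ofReal_sub _ (by positivity)]

theorem Finset.card_mul_pow_le_of_separated_of_norm_mem_Icc (F : Finset E) {ρ r R : ℝ}
    (hρ : 0 < ρ) (hρr : ρ ≤ r) (hrR : r ≤ R)
    (hsep : (F : Set E).Pairwise fun x y => 2 * ρ ≤ dist x y)
    (hF : ∀ x ∈ F, r ≤ ‖x‖ ∧ ‖x‖ ≤ R) :
    (F.card : ℝ) * ρ ^ finrank ℝ E ≤ (R + ρ) ^ finrank ℝ E - (r - ρ) ^ finrank ℝ E := by
  borelize E
  set μ : Measure E := Measure.addHaar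
  have hdisj : (F : Set E).PairwiseDisjoint fun x => ball x ρ := fun x hx y hy hxy =>
    ball_disjoint_ball (by linarith [hsep hx hy hxy])
  have hvol : (F.card : ENNReal) * ENNReal.ofReal (ρ ^ finrank ℝ E) * μ (ball 0 1) ≤
      ENNReal.ofReal ((R + ρ) ^ finrank ℝ E - (r - ρ) ^ finrank ℝ E) * μ (ball 0 1) :=
    calc (F.card : ENNReal) * ENNReal.ofReal (ρ ^ finrank ℝ E) * μ (ball 0 1)
        = ∑ x ∈ F, μ (ball x ρ) := by
          simp [Measure.addHaar_ball_of_pos μ _ hρ, mul_assoc]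
      _ = μ (⋃ x ∈ F, ball x ρ) :=
          (measure_biUnion_finset hdisj fun _ _ => measurableSet_ball).symm
      _ ≤ μ (closedBall 0 (R + ρ) \ closedBall 0 (r - ρ)) :=
          measure_mono <| Set.iUnion₂_subset fun x hx =>
            ball_subset_closedBall_diff_closedBall (hF x hx).1 (hF x hx).2
      _ = _ := Measure.addHaar_closedBall_diff_closedBall μ 0 (by linarith) (by linarith)
  rw [ENNReal.mul_le_mul_iff_left (measure_ball_pos μ 0 one_pos).ne' measure_ball_lt_top.ne,
    ← ENNReal.ofReal_natCast, ← ENNReal.ofReal_mul (Nat.cast_nonneg _),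
    ENNReal.ofReal_le_ofReal_iff
      (sub_nonneg.mpr (pow_le_pow_left₀ (by linarith) (by linarith) _))] at hvol
  exact hvol

end Packing

theorem AddSubgroup.finite_inter_closedBall {E : Type*} [NormedAddCommGroup E] [ProperSpace E]
    (L : AddSubgroup E) [DiscreteTopology L] (x : E) (R : ℝ) :
    ((L : Set E) ∩ closedBall x R).Finite := by
  rw [Set.inter_comm]
  exact finite_isBounded_inter_isClosed DiscreteTopology.isDiscrete isBounded_closedBall
    AddSubgroup.isClosed_of_discrete

theorem stmt1_general (L : Submodule ℤ (EuclideanSpace ℝ (Fin 4)))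
    (hdisc : DiscreteTopology L)
    (lam : ℝ)
    (hlam_min : ∀ f ∈ L, f ≠ 0 → lam ≤ ‖f‖)
    (a : ℝ) (ha : 0 < a) (ha_lam : a ≤ lam)
    (M t : ℝ) (hM : lam ^ 2 ≤ M) (ht : M < t) :
    {f : EuclideanSpace ℝ (Fin 4) | f ∈ L ∧ M ≤ ‖f‖ ^ 2 ∧ ‖f‖ ^ 2 ≤ t}.Finite ∧
      ({f : EuclideanSpace ℝ (Fin 4) | f ∈ L ∧ M ≤ ‖f‖ ^ 2 ∧ ‖f‖ ^ 2 ≤ t}.ncard : ℝ) ≤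
        (2 * Real.sqrt t / a + 1) ^ 4 - (2 * Real.sqrt M / a - 1) ^ 4 := by
  set S := {f : EuclideanSpace ℝ (Fin 4) | f ∈ L ∧ M ≤ ‖f‖ ^ 2 ∧ ‖f‖ ^ 2 ≤ t}
  have hnorm : ∀ f ∈ S, Real.sqrt M ≤ ‖f‖ ∧ ‖f‖ ≤ Real.sqrt t := fun f hf =>
    ⟨(Real.sqrt_le_sqrt hf.2.1).trans_eq (Real.sqrt_sq (norm_nonneg f)),
      (Real.sqrt_sq (norm_nonneg f)).symm.trans_le (Real.sqrt_le_sqrt hf.2.2)⟩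
  have hfin : S.Finite := (L.toAddSubgroup.finite_inter_closedBall 0 (Real.sqrt t)).subset
    fun f hf => ⟨hf.1, mem_closedBall_zero_iff.mpr (hnorm f hf).2⟩
  refine ⟨hfin, ?_⟩
  have hsep : S.Pairwise fun f g => 2 * (a / 2) ≤ dist f g := fun f hf g hg hfg => by
    have hlam_le_dist := hlam_min _ (L.sub_mem hf.1 hg.1) (sub_ne_zero.mpr hfg)
    rw [← dist_eq_norm] at hlam_le_dist
    linarith
  have hlam_le : lam ≤ Real.sqrt M := Real.le_sqrt_of_sq_le hM
  have hpack := hfin.toFinset.card_mul_pow_le_of_separated_of_norm_mem_Icc (half_pos ha)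
    (by linarith) (Real.sqrt_le_sqrt ht.le) (by rwa [hfin.coe_toFinset])
    fun f hf => hnorm f (hfin.mem_toFinset.mp hf)
  rw [finrank_euclideanSpace_fin, ← Set.ncard_eq_toFinset_card S hfin,
    ← le_div_iff₀ (by positivity)] at hpack
  refine hpack.trans_eq ?_
  field_simp

theorem stmt1 (L : Submodule ℤ (EuclideanSpace ℝ (Fin 4)))
    (hdisc : DiscreteTopology L)
    (hspan : Submodule.span ℝ (L : Set (EuclideanSpace ℝ (Fin 4))) = ⊤)
    (lam : ℝ)
    (hlam_mem : ∃ f ∈ L, f ≠ 0 ∧ ‖f‖ = lam)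
    (hlam_min : ∀ f ∈ L, f ≠ 0 → lam ≤ ‖f‖)
    (a : ℝ) (ha : 0 < a) (ha_lam : a ≤ lam)
    (M t : ℝ) (hM : lam ^ 2 ≤ M) (ht : M < t) :
    {f : EuclideanSpace ℝ (Fin 4) | f ∈ L ∧ M ≤ ‖f‖ ^ 2 ∧ ‖f‖ ^ 2 ≤ t}.Finite ∧
      ({f : EuclideanSpace ℝ (Fin 4) | f ∈ L ∧ M ≤ ‖f‖ ^ 2 ∧ ‖f‖ ^ 2 ≤ t}.ncard : ℝ) ≤
        (2 * Real.sqrt t / a + 1) ^ 4 - (2 * Real.sqrt M / a - 1) ^ 4 :=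
  stmt1_general L hdisc lam hlam_min a ha ha_lam M t hM ht
end

section
/- Let a > 0 and let M be a real number with M ≥ λ² ≥ a². Then ∑_{f ∈ L, ‖f‖² ≥ M} exp(−π‖f‖²) ≤ π·∫_M^∞ ((2√t/a + 1)⁴ − (2√M/a − 1)⁴)·exp(−πt) dt. -/
/-!
Lattice vectors are `a`-separated, so the balls of radius `a / 2` around the lattice vectors of norm
in `[√M, √t]` are disjoint and fill part of an annulus; comparing volumes bounds their number by
`(2√t/a + 1)⁴ - (2√M/a - 1)⁴`. Writing `exp (-π ‖f‖²) = ∫_{‖f‖²}^∞ π exp (-π t) dt` and exchanging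
sum and integral turns this counting bound into the stated one.
-/

open MeasureTheory Metric Set Filter Asymptotics Finset Module Real

section Packing

variable {E : Type*} [NormedAddCommGroup E] [NormedSpace ℝ E] [FiniteDimensional ℝ E]

theorem Finset.card_mul_pow_add_pow_le_of_pairwise_le_dist {F : Finset E} {a r R : ℝ}
    (ha : 0 < a) (hr : a / 2 < r) (hrR : r ≤ R)
    (hsep : (F : Set E).Pairwise fun x y => a ≤ dist x y) (hF : ∀ x ∈ F, r ≤ ‖x‖ ∧ ‖x‖ ≤ R) :
    #F * (a / 2) ^ finrank ℝ E + (r - a / 2) ^ finrank ℝ E ≤ (R + a / 2) ^ finrank ℝ E := by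
  let _ : MeasurableSpace E := borel E
  have : BorelSpace E := ⟨rfl⟩
  set μ : Measure E := Measure.addHaar
  have hvol (x : E) {ρ : ℝ} (hρ : 0 < ρ) :
      μ (ball x ρ) = ENNReal.ofReal (ρ ^ finrank ℝ E) * μ (ball 0 1) :=
    μ.addHaar_ball_of_pos x hρ
  have hdisj : (F : Set E).PairwiseDisjoint fun x => ball x (a / 2) := fun x hx y hy hxy =>
    ball_disjoint_ball (by linarith [hsep hx hy hxy])
  have hcore : Disjoint (⋃ x ∈ F, ball x (a / 2)) (ball 0 (r - a / 2)) := by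
    simp only [disjoint_iUnion_left]
    exact fun x hx => ball_disjoint_ball (by rw [dist_zero_right]; linarith [(hF x hx).1])
  have hsub : (⋃ x ∈ F, ball x (a / 2)) ∪ ball 0 (r - a / 2) ⊆ ball 0 (R + a / 2) := by
    refine Set.union_subset (iUnion₂_subset fun x hx => ball_subset_ball' ?_) (ball_subset_ball ?_)
    · rw [dist_zero_right]
      linarith [(hF x hx).2]
    · linarith
  have key := measure_mono (μ := μ) hsub
  rw [measure_union hcore measurableSet_ball,
    measure_biUnion_finset hdisj fun _ _ => measurableSet_ball,
    sum_congr rfl fun x _ => hvol x (half_pos ha), sum_const, nsmul_eq_mul,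
    hvol 0 (ρ := r - a / 2) (by linarith), hvol 0 (ρ := R + a / 2) (by linarith),
    ← mul_assoc, ← add_mul,
    ENNReal.mul_le_mul_iff_left (measure_ball_pos μ 0 one_pos).ne' measure_ball_lt_top.ne,
    ← ENNReal.ofReal_natCast, ← ENNReal.ofReal_mul (by positivity),
    ← ENNReal.ofReal_add (by positivity) (pow_nonneg (by linarith) _),
    ENNReal.ofReal_le_ofReal_iff (pow_nonneg (by linarith) _)] at key
  exact key

theorem Finset.card_le_of_pairwise_le_dist {F : Finset E} {a r R : ℝ}
    (ha : 0 < a) (hr : a / 2 < r) (hrR : r ≤ R)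
    (hsep : (F : Set E).Pairwise fun x y => a ≤ dist x y) (hF : ∀ x ∈ F, r ≤ ‖x‖ ∧ ‖x‖ ≤ R) :
    (#F : ℝ) ≤ (2 * R / a + 1) ^ finrank ℝ E - (2 * r / a - 1) ^ finrank ℝ E := by
  have h := card_mul_pow_add_pow_le_of_pairwise_le_dist ha hr hrR hsep hF
  rw [show R + a / 2 = (2 * R / a + 1) * (a / 2) by field_simp,
    show r - a / 2 = (2 * r / a - 1) * (a / 2) by field_simp, mul_pow, mul_pow] at h
  have hpos : 0 < (a / 2) ^ finrank ℝ E := by positivity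
  exact le_of_mul_le_mul_right (by linarith) hpos

end Packing

theorem integral_Ioi_mul_exp_neg_mul {c : ℝ} (hc : 0 < c) (x : ℝ) :
    ∫ t in Ioi x, c * exp (-c * t) = exp (-c * x) := by
  rw [integral_const_mul, integral_exp_mul_Ioi (neg_neg_of_pos hc)]
  field_simp

theorem tsum_exp_neg_mul_le_integral {ι : Type*} {g : ι → ℝ} {B : ℝ → ℝ} {c M : ℝ}
    (hc : 0 < c) (hg : ∀ i, M ≤ g i)
    (hB : ∀ t, M < t → ∀ s : Finset ι, (∀ i ∈ s, g i < t) → (#s : ℝ) ≤ B t)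
    (hBint : IntegrableOn (fun t => B t * exp (-c * t)) (Ioi M)) :
    ∑' i, exp (-c * g i) ≤ c * ∫ t in Ioi M, B t * exp (-c * t) := by
  classical
  set h : ℝ → ℝ := fun t => c * exp (-c * t)
  have hh : IntegrableOn h (Ioi M) := (exp_neg_integrableOn_Ioi M hc).const_mul c
  refine Real.tsum_le_of_sum_le (fun i => (exp_pos _).le) fun s => ?_
  calc ∑ i ∈ s, exp (-c * g i) = ∑ i ∈ s, ∫ t in Ioi M, (Ioi (g i)).indicator h t := by
        refine sum_congr rfl fun i _ => ?_
        rw [setIntegral_indicator measurableSet_Ioi, Ioi_inter_Ioi, sup_eq_right.2 (hg i),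
          integral_Ioi_mul_exp_neg_mul hc]
    _ = ∫ t in Ioi M, ∑ i ∈ s, (Ioi (g i)).indicator h t :=
        (integral_finsetSum s fun i _ => hh.indicator measurableSet_Ioi).symm
    _ ≤ ∫ t in Ioi M, c * (B t * exp (-c * t)) := by
        refine setIntegral_mono_on
          (integrable_finsetSum s fun i _ => hh.indicator measurableSet_Ioi) (hBint.const_mul c) measurableSet_Ioi fun t ht => ?_
        rw [sum_indicator_eq_sum_filter s (fun _ => h) (fun i => Ioi (g i)) (fun _ => t),
          sum_const, nsmul_eq_mul, mul_left_comm]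
        gcongr
        exact hB t ht _ fun i hi => (mem_filter.1 hi).2
    _ = c * ∫ t in Ioi M, B t * exp (-c * t) := integral_const_mul c _

theorem integrableOn_Ioi_mul_exp_neg_mul_of_isBigO_rpow {f : ℝ → ℝ} {s c M : ℝ} (hc : 0 < c)
    (hf : ContinuousOn f (Ici M)) (hfO : f =O[atTop] fun t => t ^ s) :
    IntegrableOn (fun t => f t * exp (-c * t)) (Ioi M) := by
  refine integrable_of_isBigO_exp_neg (half_pos hc) (hf.mul (by fun_prop)) ?_
  have hsplit : (fun t => t ^ s * exp (-c * t)) =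
      fun t => t ^ s * exp (-(c / 2) * t) * exp (-(c / 2) * t) := by
    ext t
    rw [mul_assoc, ← exp_add]
    ring_nf
  refine (hfO.mul (isBigO_refl _ _)).trans ?_
  rw [hsplit]
  simpa only [Pi.one_apply, one_mul] using
    (tendsto_rpow_mul_exp_neg_mul_atTop_nhds_zero s _ (half_pos hc)).isBigO_one (F := ℝ) |>.mul
      (isBigO_refl (fun t => exp (-(c / 2) * t)) atTop)

theorem isBigO_pow_mul_sqrt_add_sub (α β C : ℝ) (n : ℕ) :
    (fun t => (α * √t + β) ^ n - C) =O[atTop] fun t => t ^ (n / 2 : ℝ) := by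
  have hsqrt : Tendsto (norm ∘ fun t => √t) atTop atTop :=
    tendsto_norm_atTop_atTop.comp tendsto_sqrt_atTop
  have hlin : (fun t => α * √t + β) =O[atTop] fun t => √t :=
    (isBigO_refl _ _).const_mul_left α |>.add
      ((isLittleO_const_left.2 (Or.inr hsqrt)).isBigO)
  have hpow : (fun t => √t ^ n) =ᶠ[atTop] fun t => t ^ (n / 2 : ℝ) := by
    filter_upwards [eventually_ge_atTop 0] with t ht
    rw [sqrt_eq_rpow, ← rpow_mul_natCast ht]
    ring_nf
  have hC : (fun _ => C) =O[atTop] fun t : ℝ => t ^ (n / 2 : ℝ) := by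
    refine IsBigO.of_bound |C| ?_
    filter_upwards [eventually_ge_atTop 1] with t ht
    rw [norm_of_nonneg (rpow_nonneg (by linarith) _)]
    exact le_mul_of_one_le_right (abs_nonneg C) (one_le_rpow ht (by positivity))
  exact ((hlin.pow n).trans_eventuallyEq hpow).sub hC

theorem stmt2_general (L : Submodule ℤ (EuclideanSpace ℝ (Fin 4)))
    (lam : ℝ)
    (hlam_mem : ∃ f ∈ L, f ≠ 0 ∧ ‖f‖ = lam)
    (hlam_min : ∀ f ∈ L, f ≠ 0 → lam ≤ ‖f‖)
    (a : ℝ) (ha : 0 < a) (M : ℝ) (hM : lam ^ 2 ≤ M) (ha_lam : a ^ 2 ≤ lam ^ 2) :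
    (∑' f : {f : EuclideanSpace ℝ (Fin 4) // f ∈ L ∧ M ≤ ‖f‖ ^ 2},
        Real.exp (-Real.pi * ‖(f : EuclideanSpace ℝ (Fin 4))‖ ^ 2)) ≤
      Real.pi * ∫ u in Set.Ioi M,
        ((2 * Real.sqrt u / a + 1) ^ 4 - (2 * Real.sqrt M / a - 1) ^ 4) *
          Real.exp (-Real.pi * u) := by
  obtain ⟨f₀, -, -, rfl⟩ := hlam_mem
  have hal : a ≤ ‖f₀‖ := (pow_le_pow_iff_left₀ ha.le (norm_nonneg _) two_ne_zero).1 ha_lam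
  have haM : a ≤ √M := (le_sqrt ha.le ((sq_nonneg _).trans hM)).2 (ha_lam.trans hM)
  have hsep : (L : Set (EuclideanSpace ℝ (Fin 4))).Pairwise fun x y => a ≤ dist x y :=
    fun x hx y hy hxy =>
      hal.trans <| dist_eq_norm x y ▸ hlam_min _ (L.sub_mem hx hy) (sub_ne_zero.2 hxy)
  refine tsum_exp_neg_mul_le_integral pi_pos (fun f => f.2.2) (fun t hMt s hs => ?_) ?_
  · have hcard := card_le_of_pairwise_le_dist (F := s.map (Function.Embedding.subtype _)) ha
      (by linarith) (sqrt_le_sqrt hMt.le) (hsep.mono ?_) ?_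
    · simpa [finrank_euclideanSpace_fin] using hcard
    · simp only [coe_map, Function.Embedding.coe_subtype]
      rintro _ ⟨f, -, rfl⟩
      exact f.2.1
    · simp only [Finset.mem_map, Function.Embedding.coe_subtype]
      rintro _ ⟨f, hf, rfl⟩
      exact ⟨(sqrt_le_left (norm_nonneg _)).2 f.2.2,
        (le_sqrt (norm_nonneg _) (by linarith [sq_nonneg ‖f₀‖])).2 (hs f hf).le⟩
  · refine integrableOn_Ioi_mul_exp_neg_mul_of_isBigO_rpow (s := (4 : ℕ) / 2) pi_pos
      (by fun_prop) ?_
    exact (isBigO_pow_mul_sqrt_add_sub (2 / a) 1 ((2 * √M / a - 1) ^ 4) 4).congr_left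
      fun t => by ring

theorem stmt2 (L : Submodule ℤ (EuclideanSpace ℝ (Fin 4)))
    (hdisc : DiscreteTopology L)
    (hspan : Submodule.span ℝ (L : Set (EuclideanSpace ℝ (Fin 4))) = ⊤)
    (lam : ℝ)
    (hlam_mem : ∃ f ∈ L, f ≠ 0 ∧ ‖f‖ = lam)
    (hlam_min : ∀ f ∈ L, f ≠ 0 → lam ≤ ‖f‖)
    (a : ℝ) (ha : 0 < a) (M : ℝ) (hM : lam ^ 2 ≤ M) (ha_lam : a ^ 2 ≤ lam ^ 2) :
    (∑' f : {f : EuclideanSpace ℝ (Fin 4) // f ∈ L ∧ M ≤ ‖f‖ ^ 2},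
        Real.exp (-Real.pi * ‖(f : EuclideanSpace ℝ (Fin 4))‖ ^ 2)) ≤
      Real.pi * ∫ u in Set.Ioi M,
        ((2 * Real.sqrt u / a + 1) ^ 4 - (2 * Real.sqrt M / a - 1) ^ 4) *
          Real.exp (-Real.pi * u) :=
  stmt2_general L lam hlam_mem hlam_min a ha M hM ha_lam
end

section
/- Let F be a quartic number field which is a quadratic extension of an imaginary quadratic field K. Then g(s) = g(1/s) for every s > 0; this expresses that the size function h⁰ is symmetric on the connected component 𝕋⁰ of the identity of the Arakelov class group. -/
/-!
An imaginary quadratic field `K` has a single infinite place, so the two infinite places of `F`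
lie over the same place of `K` and are therefore exchanged by the nontrivial automorphism `τ` of
the quadratic (hence Galois) extension `F/K`. Reindexing the theta series over `𝓞 F` by `τ`
swaps `|σ(x)|` and `|σ'(x)|`, i.e. swaps the weights `s` and `1/s`.
-/

open NumberField nonZeroDivisors MeasureTheory

noncomputable section

/-- `‖ux‖² = 2u₁²|σ(x)|² + 2u₂²|σ'(x)|²` for `u = (u₁, u₂)`. -/
def normSq2 {F : Type*} [Field F] (σ σ' : F →+* ℂ) (u₁ u₂ : ℝ) (x : F) : ℝ :=
  2 * u₁ ^ 2 * ‖σ x‖ ^ 2 + 2 * u₂ ^ 2 * ‖σ' x‖ ^ 2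

/-- `N(x) = |σ(x)|²·|σ'(x)|²`, the absolute value of the norm of `x`. -/
def absN {F : Type*} [Field F] (σ σ' : F →+* ℂ) (x : F) : ℝ :=
  ‖σ x‖ ^ 2 * ‖σ' x‖ ^ 2

/-- `ε` is a fundamental unit: every unit is `ζ · εᵏ` with `ζ` a root of unity. -/
def IsFundamentalUnit {F : Type*} [Field F] [NumberField F] (ε : (𝓞 F)ˣ) : Prop :=
  ∀ u : (𝓞 F)ˣ, ∃ (ζ : (𝓞 F)ˣ) (k : ℤ), (∃ n : ℕ, 0 < n ∧ ζ ^ n = 1) ∧ u = ζ * ε ^ k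

/-- `g(s) = k⁰((O_F, (s, 1/s)))`. -/
def gfun {F : Type*} [Field F] [NumberField F] (σ σ' : F →+* ℂ) (s : ℝ) : ℝ :=
  ∑' x : 𝓞 F, Real.exp (-Real.pi * normSq2 σ σ' s (1 / s) (x : F))

namespace NumberField

lemma isTotallyComplex_of_forall_exists_im_ne_zero {K : Type*} [Field K]
    (hK : ∀ φ : K →+* ℂ, ∃ x, (φ x).im ≠ 0) : IsTotallyComplex K where
  isComplex w := InfinitePlace.not_isReal_iff_isComplex.mp fun hw => by
    obtain ⟨x, hx⟩ := hK w.embedding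
    have hconj := RingHom.congr_fun
      (ComplexEmbedding.isReal_iff.mp (InfinitePlace.isReal_iff.mp hw)) x
    exact hx (Complex.conj_eq_iff_im.mp hconj)

namespace InfinitePlace

lemma subsingleton_of_finrank_eq_two {K : Type*} [Field K] [NumberField K] [IsTotallyComplex K]
    (hK : Module.finrank ℚ K = 2) : Subsingleton (InfinitePlace K) := by
  rw [← Fintype.card_le_one_iff_subsingleton, card_eq_nrRealPlaces_add_nrComplexPlaces,
    IsTotallyComplex.nrRealPlaces_eq_zero]
  have := IsTotallyComplex.finrank (K := K)
  omega

lemma exists_smul_eq_and_smul_eq {K F : Type*} [Field K] [Field F] [Algebra K F] [IsGalois K F]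
    [Subsingleton (InfinitePlace K)] (hF : Module.finrank K F = 2) (w w' : InfinitePlace F) :
    ∃ τ : Gal(F/K), τ • w = w' ∧ τ • w' = w := by
  obtain ⟨τ, hτ⟩ := exists_smul_eq_of_comap_eq (k := K) (Subsingleton.elim
    (w.comap (algebraMap K F)) (w'.comap (algebraMap K F)))
  have : FiniteDimensional K F := .of_finrank_pos (by omega)
  have hτ2 : τ ^ 2 = 1 := by
    rw [← hF, ← IsGalois.card_aut_eq_finrank]
    exact pow_card_eq_one'
  refine ⟨τ, hτ, ?_⟩
  rw [← hτ, smul_smul, ← sq, hτ2, one_smul]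

end InfinitePlace

end NumberField

lemma normSq2_swap {F : Type*} [Field F] {σ σ' : F →+* ℂ} (τ : F ≃+* F)
    (hσ : ∀ x, ‖σ (τ x)‖ = ‖σ' x‖) (hσ' : ∀ x, ‖σ' (τ x)‖ = ‖σ x‖) (u₁ u₂ : ℝ) (x : F) :
    normSq2 σ σ' u₁ u₂ (τ x) = normSq2 σ σ' u₂ u₁ x := by
  rw [normSq2, normSq2, hσ, hσ', add_comm]

lemma gfun_one_div_of_swap {F : Type*} [Field F] [NumberField F] {σ σ' : F →+* ℂ} (τ : F ≃+* F)
    (hσ : ∀ x, ‖σ (τ x)‖ = ‖σ' x‖) (hσ' : ∀ x, ‖σ' (τ x)‖ = ‖σ x‖) (s : ℝ) :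
    gfun σ σ' (1 / s) = gfun σ σ' s := by
  let e : 𝓞 F ≃ 𝓞 F := (RingOfIntegers.mapRingEquiv τ).toEquiv
  rw [gfun, gfun, ← e.tsum_eq, one_div_one_div]
  congr! 4 with x
  exact normSq2_swap τ hσ hσ' (1 / s) s x

theorem stmt4_general
    (F K : Type*) [Field F] [NumberField F] [Field K] [NumberField K]
    [Algebra K F]
    (hquartic : Module.finrank ℚ F = 4)
    (hquad : Module.finrank K F = 2)
    (hKim : ∀ φ : K →+* ℂ, ∃ x, (φ x).im ≠ 0)
    (σ σ' : F →+* ℂ)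
 :
    ∀ s : ℝ, 0 < s → gfun σ σ' s = gfun σ σ' (1 / s) := by
  intro s _
  have hK : Module.finrank ℚ K = 2 := by
    have := Module.finrank_mul_finrank ℚ K F
    rw [hquad, hquartic] at this
    omega
  have := isTotallyComplex_of_forall_exists_im_ne_zero hKim
  have := InfinitePlace.subsingleton_of_finrank_eq_two hK
  have : IsGalois K F :=
    have : Algebra.IsQuadraticExtension K F := ⟨hquad⟩
    inferInstance
  obtain ⟨τ, hστ, hσ'τ⟩ := InfinitePlace.exists_smul_eq_and_smul_eq hquad
    (InfinitePlace.mk σ) (InfinitePlace.mk σ')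
  refine (gfun_one_div_of_swap τ.symm (fun x => ?_) (fun x => ?_) s).symm
  · simpa using congr_arg (· x) hστ
  · simpa using congr_arg (· x) hσ'τ

/-- `h⁰` is symmetric on the connected component `𝕋⁰`: `g(s) = g(1/s)`. -/
theorem stmt4
    (F K : Type*) [Field F] [NumberField F] [Field K] [NumberField K]
    [Algebra K F] [IsScalarTower ℚ K F]
    (hquartic : Module.finrank ℚ F = 4)
    (hquad : Module.finrank K F = 2)
    (hKim : ∀ φ : K →+* ℂ, ∃ x, (φ x).im ≠ 0)
    (σ σ' : F →+* ℂ)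
    (hplaces : InfinitePlace.mk σ ≠ InfinitePlace.mk σ')
 :
    ∀ s : ℝ, 0 < s → gfun σ σ' s = gfun σ σ' (1 / s) :=
  stmt4_general F K hquartic hquad hKim σ σ'
end
end

section
/- Assume the fundamental unit ε of F satisfies |σ(ε)| ≥ 1 + √2. Then for every s ∈ [0.8722, 1/0.8722] and each j ∈ {2,3}, the set 𝔅_j(s) has at most 30 elements. -/
open NumberField nonZeroDivisors MeasureTheory

noncomputable section

/-- `𝔅_j(s) = {x ∈ O_F : N(x) = j and ‖ux‖² < 8}` with `u = (s, 1/s)`. -/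
def frakB {F : Type*} [Field F] [NumberField F] (σ σ' : F →+* ℂ) (j : ℕ) (s : ℝ) : Set (𝓞 F) :=
  {x | absN σ σ' (x : F) = j ∧ normSq2 σ σ' s (1 / s) (x : F) < 8}

/-! Two elements of `𝔅_j(s)` generating the same ideal differ by a unit `u`. Since `N(x) = j ≥ 2`,
the condition `‖ux‖² < 8` confines `s²|σ(x)|²` to the interval `(2 - √2, 2 + √2)`, whose endpoints
have ratio `(1 + √2)²`; hence `|σ(u)|` and `|σ(u⁻¹)|` are both below `1 + √2 ≤ |σ(ε)|`, which forces
`u` to be a root of unity. So `#𝔅_j(s) ≤ #{I : N(I) = j} · w`, where `w` is the number of roots of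
unity in `F`. At most `4` ideals of `O_F` have norm `j`, and `φ(w) ≤ 4` with `w` even leaves
`w ∈ {2, 4, 6, 8, 10, 12}`. For `w ≥ 8` the field contains a root of unity of order `n ∈ {3, 4, 5}`
with `n` coprime to `j` and `n ∤ j - 1`, which rules out primes of norm `j` (their residue field
`𝔽_j` would contain it), except when `j = 2` and `w = 8`: then `F ∋ i`, and every prime of norm `2`
divides `(i - 1)`, an ideal of norm `4`. -/

section

open Units Ideal

namespace Ideal

variable {S : Type*} [CommRing S] [IsDedekindDomain S] [Module.Free ℤ S]

theorem prime_of_absNorm_prime {I : Ideal S} (hI : (absNorm I).Prime) : Prime I :=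
  UniqueFactorizationMonoid.irreducible_iff_prime.mp (irreducible_of_irreducible_absNorm hI)

theorem isMaximal_of_absNorm_prime {I : Ideal S} (hI : (absNorm I).Prime) : I.IsMaximal :=
  have hprime := prime_of_absNorm_prime hI
  (isPrime_of_prime hprime).isMaximal hprime.ne_zero

theorem ncard_le_of_absNorm_eq_prime_of_dvd {p k : ℕ} (hp : p.Prime) {J : Ideal S}
    (hJ : absNorm J = p ^ k) {T : Set (Ideal S)} (hT : ∀ I ∈ T, absNorm I = p ∧ I ∣ J) :
    T.ncard ≤ k := by
  obtain hfin | hinf := T.finite_or_infinite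
  swap
  · simp [hinf.ncard]
  have hT' (I : Ideal S) (hI : I ∈ hfin.toFinset) := hT I (hfin.mem_toFinset.mp hI)
  have hdvd := map_dvd absNorm <| Finset.prod_primes_dvd J
    (fun I hI => prime_of_absNorm_prime ((hT' I hI).1 ▸ hp)) fun I hI => (hT' I hI).2
  rw [map_prod, Finset.prod_congr rfl fun I hI => (hT' I hI).1, Finset.prod_const, hJ,
    Nat.pow_dvd_pow_iff_le_right hp.one_lt] at hdvd
  rwa [Set.ncard_eq_toFinset_card T hfin]

theorem sub_one_mem_of_sq_eq_neg_one {R : Type*} [CommRing R] {P : Ideal R} [P.IsPrime]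
    (h2 : (2 : R) ∈ P) {ζ : R} (hζ : ζ ^ 2 = -1) : ζ - 1 ∈ P :=
  IsPrime.mem_of_pow_mem ‹_› 2 <| by
    rw [show (ζ - 1) ^ 2 = 2 * (-ζ) by linear_combination hζ]
    exact P.mul_mem_right _ h2

variable [Module.Finite ℤ S]

theorem ncard_setOf_absNorm_eq_prime_le {p : ℕ} (hp : p.Prime) :
    {I : Ideal S | absNorm I = p}.ncard ≤ Module.finrank ℤ S :=
  ncard_le_of_absNorm_eq_prime_of_dvd hp (absNorm_span_natCast p) fun I hI =>
    ⟨hI, dvd_iff_le.mpr <| (span_singleton_le_iff_mem I).mpr (hI ▸ absNorm_mem I)⟩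

theorem absNorm_span_sub_one_sq {ζ : S} (hζ : ζ ^ 2 = -1) :
    absNorm (span {ζ - 1}) ^ 2 = 2 ^ Module.finrank ℤ S := by
  have hu : IsUnit ζ := IsUnit.of_mul_eq_one (-ζ) (by linear_combination -hζ)
  rw [← map_pow, span_singleton_pow,
    show (ζ - 1) ^ 2 = (2 : ℕ) * (-ζ) by push_cast; linear_combination hζ,
    ← span_singleton_mul_span_singleton, map_mul, absNorm_span_natCast,
    span_singleton_eq_top.mpr hu.neg, absNorm_top, mul_one]

theorem ncard_setOf_absNorm_eq_two_le {m : ℕ} (hm : Module.finrank ℤ S = 2 * m) {ζ : S}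
    (hζ : ζ ^ 2 = -1) : {I : Ideal S | absNorm I = 2}.ncard ≤ m := by
  have hJ : absNorm (span {ζ - 1}) = 2 ^ m := Nat.pow_left_injective two_ne_zero <| by
    dsimp only
    rw [absNorm_span_sub_one_sq hζ, hm, pow_mul']
  refine ncard_le_of_absNorm_eq_prime_of_dvd Nat.prime_two hJ
    fun P (hP : absNorm P = 2) => ⟨hP, ?_⟩
  have := isMaximal_of_absNorm_prime (hP ▸ Nat.prime_two)
  have h2 : (2 : S) ∈ P := by exact_mod_cast hP ▸ absNorm_mem P
  exact dvd_iff_le.mpr <| (span_singleton_le_iff_mem P).mpr (sub_one_mem_of_sq_eq_neg_one h2 hζ)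

end Ideal

theorem Nat.prime_pow_le_two_mul_totient {p : ℕ} (hp : p.Prime) (k : ℕ) :
    p ^ k ≤ 2 * (p ^ k).totient := by
  rcases k with _ | k
  · simp
  rw [Nat.totient_prime_pow_succ hp, pow_succ]
  have : p ≤ 2 * (p - 1) := by have := hp.two_le; omega
  calc p ^ k * p ≤ p ^ k * (2 * (p - 1)) := Nat.mul_le_mul_left _ this
    _ = 2 * (p ^ k * (p - 1)) := by ring

theorem Nat.dvd_120_of_totient_le_four {n : ℕ} (hn : 0 < n) (h : n.totient ≤ 4) : n ∣ 120 := by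
  refine (Nat.dvd_iff_prime_pow_dvd_dvd 120 n).mpr fun p k hp hpk => ?_
  have hle : (p ^ k).totient ≤ 4 :=
    (Nat.le_of_dvd (Nat.totient_pos.mpr hn) (Nat.totient_dvd_of_dvd hpk)).trans h
  have hsmall : p ^ k ≤ 8 := (Nat.prime_pow_le_two_mul_totient hp k).trans (by omega)
  have hpos : 0 < p ^ k := pow_pos hp.pos k
  generalize p ^ k = q at hle hsmall hpos
  revert hle hpos
  decide +revert

theorem Nat.le_six_or_eq_of_even_of_totient_le_four {n : ℕ} (hn : 0 < n) (he : Even n)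
    (h : n.totient ≤ 4) : n ≤ 6 ∨ n = 8 ∨ n = 10 ∨ n = 12 := by
  have key : ∀ m ∈ Nat.divisors 120, Even m → m.totient ≤ 4 →
      m ≤ 6 ∨ m = 8 ∨ m = 10 ∨ m = 12 := by decide
  exact key n (Nat.mem_divisors.mpr ⟨Nat.dvd_120_of_totient_le_four hn h, by norm_num⟩) he h

theorem IsPrimitiveRoot.sq_eq_neg_one {R : Type*} [CommRing R] [IsDomain R] {ζ : R}
    (hζ : IsPrimitiveRoot ζ 4) : ζ ^ 2 = -1 :=
  (hζ.pow_of_dvd two_ne_zero (by norm_num)).eq_neg_one_of_two_right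

section NumberField

variable {F : Type*} [Field F] [NumberField F]

theorem NumberField.Units.exists_isPrimitiveRoot_of_dvd_torsionOrder {d : ℕ}
    (hd : d ∣ torsionOrder F) : ∃ ζ : (𝓞 F)ˣ, IsPrimitiveRoot ζ d := by
  obtain ⟨g, hg⟩ := IsCyclic.exists_generator (α := torsion F)
  have hgen : IsPrimitiveRoot (g : (𝓞 F)ˣ) (torsionOrder F) := by
    rw [IsPrimitiveRoot.coe_submonoidClass_iff, torsionOrder,
      ← orderOf_eq_card_of_forall_mem_zpowers hg]
    exact IsPrimitiveRoot.orderOf g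
  obtain ⟨e, he⟩ := hd
  have he0 : e ≠ 0 := by rintro rfl; exact torsionOrder_ne_zero F (by simpa using he)
  have := hgen.pow_of_dvd he0 (Dvd.intro_left d he.symm)
  rw [he, Nat.mul_div_cancel _ (Nat.pos_of_ne_zero he0)] at this
  exact ⟨_, this⟩

theorem NumberField.Units.totient_torsionOrder_le_finrank :
    (torsionOrder F).totient ≤ Module.finrank ℚ F := by
  obtain ⟨ζ, hζ⟩ := exists_isPrimitiveRoot_of_dvd_torsionOrder (F := F) dvd_rfl
  rw [← Polynomial.natDegree_cyclotomic (torsionOrder F) ℚ,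
    Polynomial.cyclotomic_eq_minpoly_rat (IsPrimitiveRoot.coe_coe_iff.mpr hζ)
      (torsionOrder_pos F)]
  exact minpoly.natDegree_le _

theorem IsPrimitiveRoot.dvd_absNorm_sub_one {P : Ideal (𝓞 F)} [P.IsMaximal] {n : ℕ} [NeZero n]
    {ζ : (𝓞 F)ˣ} (hζ : IsPrimitiveRoot ζ n) (hP : (absNorm P).Coprime n) :
    n ∣ absNorm P - 1 := by
  let _ := Ideal.Quotient.field P
  have hP₁ : absNorm P ≠ 1 := absNorm_eq_one_iff.not.mpr (IsMaximal.ne_top ‹_›)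
  have h := Subgroup.card_dvd_of_injective _ (rootsOfUnityMapQuot_injective n hP₁ hP)
  rwa [Nat.card_units, hζ.card_rootsOfUnity', ← Submodule.cardQuot_apply, ← absNorm_apply] at h

theorem Ideal.setOf_absNorm_eq_eq_empty_of_isPrimitiveRoot {p n : ℕ} [NeZero n] (hp : p.Prime)
    (hpn : p.Coprime n) (hn : ¬ n ∣ p - 1) {ζ : (𝓞 F)ˣ} (hζ : IsPrimitiveRoot ζ n) :
    {I : Ideal (𝓞 F) | absNorm I = p} = ∅ := by
  refine Set.eq_empty_of_forall_notMem fun P (hP : absNorm P = p) => hn ?_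
  have := isMaximal_of_absNorm_prime (hP ▸ hp)
  exact hP ▸ hζ.dvd_absNorm_sub_one (hP ▸ hpn)

theorem ncard_setOf_absNorm_eq_mul_torsionOrder_le (hF : Module.finrank ℚ F = 4) {p : ℕ}
    (hp : p = 2 ∨ p = 3) : {I : Ideal (𝓞 F) | absNorm I = p}.ncard * torsionOrder F ≤ 30 := by
  have hrank : Module.finrank ℤ (𝓞 F) = 2 * 2 := (RingOfIntegers.rank F).trans hF
  have hprime : p.Prime := by rcases hp with rfl | rfl <;> norm_num
  have hT : {I : Ideal (𝓞 F) | absNorm I = p}.ncard ≤ 4 :=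
    (ncard_setOf_absNorm_eq_prime_le hprime).trans hrank.le
  have hempty {n : ℕ} [NeZero n] (hd : n ∣ torsionOrder F) (hpn : p.Coprime n)
      (hn : ¬ n ∣ p - 1) : {I : Ideal (𝓞 F) | absNorm I = p}.ncard = 0 := by
    obtain ⟨ζ, hζ⟩ := exists_isPrimitiveRoot_of_dvd_torsionOrder hd
    rw [setOf_absNorm_eq_eq_empty_of_isPrimitiveRoot hprime hpn hn hζ, Set.ncard_empty]
  rcases Nat.le_six_or_eq_of_even_of_totient_le_four (torsionOrder_pos F) (even_torsionOrder F)
    (hF ▸ totient_torsionOrder_le_finrank) with hw | hw | hw | hw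
  · nlinarith
  · rcases hp with rfl | rfl
    · obtain ⟨ζ, hζ⟩ := exists_isPrimitiveRoot_of_dvd_torsionOrder (F := F) (d := 4) (by simp [hw])
      have := ncard_setOf_absNorm_eq_two_le hrank
        (IsPrimitiveRoot.coe_units_iff.mpr hζ).sq_eq_neg_one
      rw [hw]
      omega
    · simp [hempty (n := 4) (by simp [hw]) (by norm_num) (by norm_num)]
  · rcases hp with rfl | rfl <;> simp [hempty (n := 5) (by simp [hw]) (by norm_num) (by norm_num)]
  · rcases hp with rfl | rfl
    · simp [hempty (n := 3) (by simp [hw]) (by norm_num) (by norm_num)]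
    · simp [hempty (n := 4) (by simp [hw]) (by norm_num) (by norm_num)]

theorem IsFundamentalUnit.mem_torsion_of_norm_lt {ε : (𝓞 F)ˣ} (hfund : IsFundamentalUnit ε)
    (σ : F →+* ℂ) (hε : 1 ≤ ‖σ ε‖) {u : (𝓞 F)ˣ} (hu : ‖σ u‖ < ‖σ ε‖)
    (hu' : ‖σ ↑(u⁻¹)‖ < ‖σ ε‖) : u ∈ torsion F := by
  obtain ⟨ζ, k, ⟨n, hn, hζn⟩, rfl⟩ := hfund u
  have hnorm (v : (𝓞 F)ˣ) : ‖σ v‖ = ‖(Units.complexEmbedding σ v : ℂ)‖ := rfl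
  have hζ : ‖σ ζ‖ = 1 := by
    rw [← pow_eq_one_iff_of_nonneg (norm_nonneg _) hn.ne', hnorm, ← norm_pow,
      ← Units.val_pow_eq_pow_val, ← map_pow, hζn, map_one, Units.val_one, norm_one]
  have hval : ‖σ ↑(ζ * ε ^ k)‖ = ‖σ ε‖ ^ k := by
    rw [hnorm, map_mul, map_zpow, Units.val_mul, Units.val_zpow_eq_zpow_val, norm_mul, norm_zpow,
      ← hnorm, ← hnorm, hζ, one_mul]
  have hval' : ‖σ ↑((ζ * ε ^ k)⁻¹)‖ = ‖σ ε‖ ^ (-k) := by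
    rw [hnorm, map_inv, Units.val_inv_eq_inv_val, norm_inv, ← hnorm, hval, zpow_neg]
  have hk : k = 0 := by
    rcases lt_trichotomy k 0 with hk | hk | hk
    · have := zpow_le_zpow_right₀ hε (by omega : (1 : ℤ) ≤ -k)
      rw [zpow_one, ← hval'] at this
      exact absurd hu' this.not_gt
    · exact hk
    · have := zpow_le_zpow_right₀ hε (by omega : (1 : ℤ) ≤ k)
      rw [zpow_one, ← hval] at this
      exact absurd hu this.not_gt
  rw [hk, zpow_zero, mul_one]
  exact isOfFinOrder_iff_pow_eq_one.mpr ⟨n, hn, hζn⟩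

theorem NumberField.isTotallyComplex_of_forall_exists_im_ne_zero_s5 {K : Type*} [Field K]
    (hK : ∀ φ : K →+* ℂ, ∃ x, (φ x).im ≠ 0) : IsTotallyComplex K where
  isComplex w := InfinitePlace.not_isReal_iff_isComplex.mp fun ⟨φ, hφ, _⟩ => by
    obtain ⟨x, hx⟩ := hK φ
    exact hx (Complex.conj_eq_iff_im.mp (congrArg (· x) (ComplexEmbedding.isReal_iff.mp hφ)))

theorem absNorm_span_singleton_eq_absN [IsTotallyComplex F] (hF : Module.finrank ℚ F = 4)
    {σ σ' : F →+* ℂ} (hσ : InfinitePlace.mk σ ≠ InfinitePlace.mk σ') (x : 𝓞 F) :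
    (absNorm (span {x}) : ℝ) = absN σ σ' x := by
  classical
  have hcard : Fintype.card (InfinitePlace F) = 2 := by
    have := IsTotallyComplex.finrank (K := F)
    rw [InfinitePlace.card_eq_nrRealPlaces_add_nrComplexPlaces,
      IsTotallyComplex.nrRealPlaces_eq_zero]
    omega
  have huniv : (Finset.univ : Finset (InfinitePlace F)) = {.mk σ, .mk σ'} :=
    (Finset.eq_of_subset_of_card_le (Finset.subset_univ _) (by
      rw [Finset.card_univ, hcard, Finset.card_pair hσ])).symm
  have hprod := InfinitePlace.prod_eq_abs_norm (K := F) (x : F)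
  rw [huniv, Finset.prod_pair hσ, IsTotallyComplex.mult_eq, IsTotallyComplex.mult_eq,
    ← Algebra.coe_norm_int] at hprod
  simp only [InfinitePlace.apply] at hprod
  rw [absNorm_span_singleton, Nat.cast_natAbs, Int.cast_abs, absN, hprod, Rat.cast_abs,
    Rat.cast_intCast]

end NumberField

theorem Set.finite_and_ncard_le_ncard_image_span_mul_card {R : Type*} [CommRing R] [IsDomain R]
    (G : Subgroup Rˣ) [Finite G] {S : Set R} (hT : ((fun x : R => span {x}) '' S).Finite)
    (hG : ∀ x ∈ S, ∀ y ∈ S, ∀ u : Rˣ, x * u = y → u ∈ G) :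
    S.Finite ∧ S.ncard ≤ ((fun x : R => span {x}) '' S).ncard * Nat.card G := by
  set T := (fun x : R => span {x}) '' S
  choose! rep hrepS hrep using fun I (hI : I ∈ T) => hI
  have hsub : S ⊆ Set.image2 (fun I (g : Rˣ) => rep I * g) T G := by
    intro x hx
    have hI : span {x} ∈ T := ⟨x, hx, rfl⟩
    obtain ⟨u, hu⟩ := span_singleton_eq_span_singleton.mp (hrep _ hI)
    exact ⟨_, hI, u, hG _ (hrepS _ hI) x hx u hu, hu⟩
  have hprod : (T ×ˢ (G : Set Rˣ)).Finite := hT.prod (Set.toFinite _)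
  rw [← Set.image_prod] at hsub
  refine ⟨(hprod.image _).subset hsub, ?_⟩
  calc S.ncard ≤ _ := Set.ncard_le_ncard hsub (hprod.image _)
    _ ≤ (T ×ˢ (G : Set Rˣ)).ncard := Set.ncard_image_le hprod
    _ = T.ncard * Nat.card G := by rw [Set.ncard_prod, ← Nat.card_coe_set_eq]; rfl

section frakB

variable {F : Type*} [Field F] [NumberField F] {σ σ' : F →+* ℂ} {j : ℕ} {s : ℝ}

theorem sq_mul_norm_sq_mem_Ioo_of_mem_frakB (hs : 0 < s) (hj : 2 ≤ j) {x : 𝓞 F}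
    (hx : x ∈ frakB σ σ' j s) : s ^ 2 * ‖σ x‖ ^ 2 ∈ Set.Ioo (2 - √2) (2 + √2) := by
  obtain ⟨hN, hB⟩ := hx
  simp only [absN] at hN
  simp only [normSq2] at hB
  set t := s ^ 2 * ‖σ x‖ ^ 2
  have hj' : (2 : ℝ) ≤ j := by exact_mod_cast hj
  have ht : 0 < t := by
    refine mul_pos (by positivity) (lt_of_le_of_ne (by positivity) fun h => ?_)
    rw [← h, zero_mul] at hN
    linarith
  -- multiplying `‖ux‖² < 8` by `t` gives `t² - 4t + j < 0`, since `N(x) = j`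
  have hquad : (t - 2) ^ 2 < √2 ^ 2 := by
    have hB' := mul_lt_mul_of_pos_right hB ht
    have hss : (1 / s) ^ 2 * s ^ 2 = 1 := by field_simp
    rw [Real.sq_sqrt zero_le_two]
    nlinarith
  have := abs_sub_lt_iff.mp (abs_lt_of_sq_lt_sq hquad (Real.sqrt_nonneg 2))
  constructor <;> linarith

theorem lt_one_add_sqrt_two_of_mem_Ioo {t c : ℝ} (ht : t ∈ Set.Ioo (2 - √2) (2 + √2))
    (htc : t * c ^ 2 ∈ Set.Ioo (2 - √2) (2 + √2)) : c < 1 + √2 := by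
  by_contra! h
  have h2 : √2 ^ 2 = 2 := Real.sq_sqrt zero_le_two
  have hc2 : (1 + √2) ^ 2 ≤ c ^ 2 := pow_le_pow_left₀ (by positivity) h 2
  have hid : (2 - √2) * (1 + √2) ^ 2 = 2 + √2 := by linear_combination (-√2) * h2
  have ht0 : 0 < t := lt_of_le_of_lt (by nlinarith) ht.1
  nlinarith [ht.1, htc.2, mul_le_mul_of_nonneg_left hc2 ht0.le]

theorem mem_torsion_of_mul_mem_frakB {ε : (𝓞 F)ˣ} (hfund : IsFundamentalUnit ε)
    (hε : 1 + √2 ≤ ‖σ ε‖) (hs : 0 < s) (hj : 2 ≤ j) {x y : 𝓞 F} (hx : x ∈ frakB σ σ' j s)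
    (hy : y ∈ frakB σ σ' j s) {u : (𝓞 F)ˣ} (hxy : x * u = y) : u ∈ torsion F := by
  have key {a b : 𝓞 F} (ha : a ∈ frakB σ σ' j s) (hb : b ∈ frakB σ σ' j s) {v : (𝓞 F)ˣ}
      (hab : a * v = b) : ‖σ v‖ < ‖σ ε‖ := by
    refine (lt_one_add_sqrt_two_of_mem_Ioo (sq_mul_norm_sq_mem_Ioo_of_mem_frakB hs hj ha)
      ?_).trans_le hε
    rw [mul_assoc, ← mul_pow, ← norm_mul, ← map_mul]
    have hb' := sq_mul_norm_sq_mem_Ioo_of_mem_frakB hs hj hb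
    rw [← hab] at hb'
    exact hb'
  have hε1 : 1 ≤ ‖σ ε‖ := le_trans (by linarith [Real.sqrt_nonneg 2]) hε
  exact hfund.mem_torsion_of_norm_lt σ hε1 (key hx hy hxy)
    (key hy hx (by rw [← hxy, mul_assoc, Units.mul_inv, mul_one]))

end frakB

end
theorem stmt5_general
    (F K : Type*) [Field F] [NumberField F] [Field K]
    [Algebra K F]
    (hquartic : Module.finrank ℚ F = 4)
    (hKim : ∀ φ : K →+* ℂ, ∃ x, (φ x).im ≠ 0)
    (σ σ' : F →+* ℂ)
    (hplaces : InfinitePlace.mk σ ≠ InfinitePlace.mk σ')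
    (ε : (𝓞 F)ˣ) (hfund : IsFundamentalUnit ε)
    (hε : 1 + Real.sqrt 2 ≤ ‖σ ((ε : 𝓞 F) : F)‖) :
    ∀ s ∈ Set.Icc (0.8722 : ℝ) (1 / 0.8722), ∀ j ∈ ({2, 3} : Set ℕ),
      (frakB σ σ' j s).Finite ∧ (frakB σ σ' j s).ncard ≤ 30 := by
  intro s hs j hj
  have hs0 : 0 < s := lt_of_lt_of_le (by norm_num) hs.1
  have hj23 : j = 2 ∨ j = 3 := hj
  have hj2 : 2 ≤ j := by omega
  have : IsTotallyComplex K := isTotallyComplex_of_forall_exists_im_ne_zero_s5 hKim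
  have : IsTotallyComplex F := isTotallyComplex_of_algebra K F
  have hT : (fun x : 𝓞 F => Ideal.span {x}) '' frakB σ σ' j s ⊆ {I | Ideal.absNorm I = j} := by
    rintro _ ⟨x, hx, rfl⟩
    exact_mod_cast (absNorm_span_singleton_eq_absN hquartic hplaces x).trans hx.1
  have hTfin := (Ideal.finite_setOfPred_absNorm_eq j).subset hT
  obtain ⟨hfin, hcard⟩ := Set.finite_and_ncard_le_ncard_image_span_mul_card (Units.torsion F) hTfin
    fun x hx y hy u hu => mem_torsion_of_mul_mem_frakB hfund hε hs0 hj2 hx hy hu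
  refine ⟨hfin, hcard.trans ?_⟩
  calc _ ≤ {I : Ideal (𝓞 F) | Ideal.absNorm I = j}.ncard * Units.torsionOrder F :=
        Nat.mul_le_mul_right _ (Set.ncard_le_ncard hT (Ideal.finite_setOfPred_absNorm_eq j))
    _ ≤ 30 := ncard_setOf_absNorm_eq_mul_torsionOrder_le hquartic hj23

theorem stmt5
    (F K : Type*) [Field F] [NumberField F] [Field K] [NumberField K]
    [Algebra K F] [IsScalarTower ℚ K F]
    (hquartic : Module.finrank ℚ F = 4)
    (hquad : Module.finrank K F = 2)
    (hKim : ∀ φ : K →+* ℂ, ∃ x, (φ x).im ≠ 0)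
    (σ σ' : F →+* ℂ)
    (hplaces : InfinitePlace.mk σ ≠ InfinitePlace.mk σ')
    (ε : (𝓞 F)ˣ) (hfund : IsFundamentalUnit ε)
    (hε : 1 + Real.sqrt 2 ≤ ‖σ ((ε : 𝓞 F) : F)‖) :
    ∀ s ∈ Set.Icc (0.8722 : ℝ) (1 / 0.8722), ∀ j ∈ ({2, 3} : Set ℕ),
      (frakB σ σ' j s).Finite ∧ (frakB σ σ' j s).ncard ≤ 30 :=
  stmt5_general F K hquartic hKim σ σ' hplaces ε hfund hε
end
end

section
/- Let I be a non-principal fractional ideal of F and let u = (u₁,u₂) be positive reals with u₁²·u₂²·N(I) = 1 (so the Arakelov divisor D = (I,u) has degree 0 and its class does not lie on the connected component 𝕋⁰). Then k⁰(I,u) < k⁰(D₀). -/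
open NumberField nonZeroDivisors MeasureTheory

noncomputable section

/-- `k⁰` of the Arakelov divisor `(I, (u₁, u₂))`. -/
def k0 {F : Type*} [Field F] [NumberField F] (σ σ' : F →+* ℂ)
    (I : FractionalIdeal (𝓞 F)⁰ F) (u₁ u₂ : ℝ) : ℝ :=
  ∑' x : (I : Submodule (𝓞 F) F), Real.exp (-Real.pi * normSq2 σ σ' u₁ u₂ x)

/-!
Embed `F` into `ℂ² ≅ ℝ⁴` by `x ↦ (√2 u₁ σ(x), √2 u₂ σ'(x))`; then `k⁰(I, u)` is the Gaussian
theta series `∑ exp (-π ‖v‖²)` of the image of `I`. By AM–GM, `‖ux‖² ≥ 4 u₁ u₂ √N(x)`, and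
`N(x) = N(I) · N(x I⁻¹)` where `x I⁻¹` is an integral ideal, different from `O_F` because `I` is
not principal. Hence every nonzero vector of the lattice of `(I, u)` has squared length at least
`4√2`, while `±1 ∈ O_F` have squared length `4`. A volume-packing argument bounds the number of
lattice vectors with `μ + k ≤ ‖v‖ ≤ μ + k + 1` by `(k + 4)⁴` when all nonzero vectors have length
at least `μ ≥ 2`; summing over `k` gives `k⁰(I, u) ≤ 1 + 257 e^{-4√2π} < 1 + 2 e^{-4π} ≤ k⁰(D₀)`.
-/

open Finset Module Metric Real

theorem card_mul_pow_le_of_pairwise_le_dist {E : Type*} [NormedAddCommGroup E] [NormedSpace ℝ E]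
    [FiniteDimensional ℝ E] {α : Type*} (s : Finset α) (f : α → E) {δ R : ℝ} (hδ : 0 < δ)
    (hR : 0 ≤ R) (hsep : (s : Set α).Pairwise fun a b => δ ≤ dist (f a) (f b))
    (hs : ∀ a ∈ s, ‖f a‖ ≤ R) :
    #s * (δ / 2) ^ finrank ℝ E ≤ (R + δ / 2) ^ finrank ℝ E := by
  borelize E
  let μ : Measure E := Measure.addHaar
  have hdisj : (s : Set α).PairwiseDisjoint fun a => ball (f a) (δ / 2) :=
    hsep.mono' fun a b h => ball_disjoint_ball (by linarith)
  have hsub : ⋃ a ∈ s, ball (f a) (δ / 2) ⊆ ball 0 (R + δ / 2) :=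
    Set.iUnion₂_subset fun a ha => ball_subset_ball' (by simpa [add_comm] using hs a ha)
  have hvol := (measure_biUnion_finset hdisj fun _ _ => measurableSet_ball).symm.trans_le
    (measure_mono (μ := μ) hsub)
  rwa [μ.addHaar_ball_of_pos 0 (r := R + δ / 2) (by positivity),
    sum_congr rfl fun a _ => μ.addHaar_ball_of_pos (f a) (half_pos hδ), sum_const, nsmul_eq_mul,
    ← mul_assoc,
    ENNReal.mul_le_mul_iff_left (measure_ball_pos μ 0 one_pos).ne' measure_ball_lt_top.ne,
    ← ENNReal.ofReal_natCast, ← ENNReal.ofReal_mul (by positivity),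
    ENNReal.ofReal_le_ofReal_iff (by positivity)] at hvol

theorem card_le_of_pairwise_le_dist_of_norm_le {E : Type*} [NormedAddCommGroup E]
    [NormedSpace ℝ E] [FiniteDimensional ℝ E] {α : Type*} (s : Finset α) (f : α → E) {μ : ℝ}
    (hμ : 2 ≤ μ) (k : ℕ) (hsep : (s : Set α).Pairwise fun a b => μ ≤ dist (f a) (f b))
    (hs : ∀ a ∈ s, ‖f a‖ ≤ μ + k + 1) :
    (#s : ℝ) ≤ (k + 4) ^ finrank ℝ E := by
  have hpack := card_mul_pow_le_of_pairwise_le_dist s f (by linarith) (by positivity) hsep hs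
  have hradius : μ + k + 1 + μ / 2 ≤ (k + 4) * (μ / 2) := by nlinarith
  have hμ2 : 0 < (μ / 2) ^ finrank ℝ E := by positivity
  rw [← le_div_iff₀ hμ2] at hpack
  refine hpack.trans ((div_le_iff₀ hμ2).2 ?_)
  rw [← mul_pow]
  exact pow_le_pow_left₀ (by positivity) hradius _

theorem pow_four_mul_exp_neg_pi_le {μ : ℝ} (hμ : 2 ≤ μ) (k : ℕ) :
    ((k : ℝ) + 4) ^ 4 * exp (-π * (μ + k) ^ 2)
      ≤ 256 * exp (-π * μ ^ 2) * exp (-11) ^ k := by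
  have hpoly : ((k : ℝ) + 4) ^ 4 ≤ 256 * exp 1 ^ k := by
    calc ((k : ℝ) + 4) ^ 4 = 256 * (k / 4 + 1) ^ 4 := by ring
    _ ≤ 256 * exp (k / 4) ^ 4 := by
      gcongr; exact Real.add_one_le_exp _
    _ = 256 * exp 1 ^ k := by
      rw [← exp_nat_mul, ← exp_nat_mul]; congr 2; push_cast; ring
  have hgauss : exp (-π * (μ + k) ^ 2) ≤ exp (-π * μ ^ 2) * exp (-12) ^ k := by
    rw [← exp_nat_mul, ← exp_add, exp_le_exp]
    have hk : (4 : ℝ) * k ≤ 2 * μ * k + k ^ 2 := by nlinarith [k.cast_nonneg (α := ℝ)]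
    nlinarith [Real.pi_gt_three, k.cast_nonneg (α := ℝ)]
  calc ((k : ℝ) + 4) ^ 4 * exp (-π * (μ + k) ^ 2)
      ≤ 256 * exp 1 ^ k * (exp (-π * μ ^ 2) * exp (-12) ^ k) := by
        gcongr
  _ = 256 * exp (-π * μ ^ 2) * (exp 1 * exp (-12)) ^ k := by ring
  _ = 256 * exp (-π * μ ^ 2) * exp (-11) ^ k := by rw [← exp_add]; norm_num

theorem mul_tsum_geometric_exp_neg_eleven_le {c : ℝ} (hc : 0 ≤ c) :
    ∑' k : ℕ, 256 * c * exp (-11) ^ k ≤ 257 * c := by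
  have hlt : exp (-11) < 1 := exp_lt_one_iff.2 (by norm_num)
  have hsmall : exp (-11) ≤ 1 / 257 := by
    rw [exp_neg, inv_le_comm₀ (exp_pos _) (by norm_num), one_div, inv_inv]
    calc (257 : ℝ) ≤ 2 ^ 11 := by norm_num
    _ ≤ exp 1 ^ 11 := by gcongr; linarith [Real.add_one_le_exp 1]
    _ = exp 11 := by rw [← exp_nat_mul]; norm_num
  rw [tsum_mul_left, tsum_geometric_of_lt_one (exp_pos _).le hlt, mul_comm (257 : ℝ),
    ← div_eq_mul_inv, div_le_iff₀ (by linarith)]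
  nlinarith

theorem sum_exp_neg_pi_norm_sq_le {E : Type*} [NormedAddCommGroup E] [NormedSpace ℝ E]
    [FiniteDimensional ℝ E] (hE : finrank ℝ E = 4) {α : Type*} (s : Finset α) (f : α → E)
    {μ : ℝ} (hμ : 2 ≤ μ) (hsep : (s : Set α).Pairwise fun a b => μ ≤ dist (f a) (f b))
    (hnorm : ∀ a ∈ s, μ ≤ ‖f a‖) :
    ∑ a ∈ s, exp (-π * ‖f a‖ ^ 2) ≤ 257 * exp (-π * μ ^ 2) := by
  let shell : α → ℕ := fun a => ⌊‖f a‖ - μ⌋₊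
  have hshell_lower (a) (ha : a ∈ s) : μ + shell a ≤ ‖f a‖ := by
    linarith [Nat.floor_le (sub_nonneg.2 (hnorm a ha))]
  have hshell_upper (a) : ‖f a‖ ≤ μ + shell a + 1 := by
    linarith [Nat.lt_floor_add_one (‖f a‖ - μ)]
  have hshell_sum (k : ℕ) : ∑ a ∈ s with shell a = k, exp (-π * ‖f a‖ ^ 2)
      ≤ 256 * exp (-π * μ ^ 2) * exp (-11) ^ k := by
    have hcard : (#{a ∈ s | shell a = k} : ℝ) ≤ (k + 4) ^ 4 := by
      rw [← hE]
      refine card_le_of_pairwise_le_dist_of_norm_le _ f hμ k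
        (hsep.mono (coe_subset.2 (filter_subset _ s))) fun a ha => ?_
      rw [mem_filter] at ha
      simpa [ha.2] using hshell_upper a
    calc ∑ a ∈ s with shell a = k, exp (-π * ‖f a‖ ^ 2)
        ≤ ∑ a ∈ s with shell a = k, exp (-π * (μ + k) ^ 2) := by
          refine sum_le_sum fun a ha => ?_
          rw [mem_filter] at ha
          have hk := hshell_lower a ha.1
          rw [ha.2] at hk
          rw [exp_le_exp, neg_mul, neg_mul, neg_le_neg_iff]
          gcongr
    _ ≤ ((k : ℝ) + 4) ^ 4 * exp (-π * (μ + k) ^ 2) := by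
          rw [sum_const, nsmul_eq_mul]; gcongr
    _ ≤ 256 * exp (-π * μ ^ 2) * exp (-11) ^ k := pow_four_mul_exp_neg_pi_le hμ k
  have hgeom : Summable fun k : ℕ => 256 * exp (-π * μ ^ 2) * exp (-11) ^ k :=
    (summable_geometric_of_lt_one (exp_pos _).le (exp_lt_one_iff.2 (by norm_num))).mul_left _
  calc ∑ a ∈ s, exp (-π * ‖f a‖ ^ 2)
      = ∑ k ∈ s.image shell, ∑ a ∈ s with shell a = k, exp (-π * ‖f a‖ ^ 2) :=
        (sum_fiberwise_of_maps_to (fun a ha => mem_image_of_mem shell ha) _).symm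
  _ ≤ ∑ k ∈ s.image shell, 256 * exp (-π * μ ^ 2) * exp (-11) ^ k :=
        sum_le_sum fun k _ => hshell_sum k
  _ ≤ ∑' k : ℕ, 256 * exp (-π * μ ^ 2) * exp (-11) ^ k :=
        hgeom.sum_le_tsum _ fun k _ => by positivity
  _ ≤ 257 * exp (-π * μ ^ 2) := mul_tsum_geometric_exp_neg_eleven_le (exp_pos _).le

theorem summable_exp_neg_pi_norm_sq_and_tsum_le {A E : Type*} [AddCommGroup A]
    [NormedAddCommGroup E] [NormedSpace ℝ E] [FiniteDimensional ℝ E] (hE : finrank ℝ E = 4)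
    (φ : A →+ E) {μ : ℝ} (hμ : 2 ≤ μ) (hφ : ∀ a ≠ 0, μ ≤ ‖φ a‖) :
    Summable (fun a => exp (-π * ‖φ a‖ ^ 2)) ∧
      ∑' a, exp (-π * ‖φ a‖ ^ 2) ≤ 1 + 257 * exp (-π * μ ^ 2) := by
  classical
  have hpartial (s : Finset A) : ∑ a ∈ s, exp (-π * ‖φ a‖ ^ 2) ≤ 1 + 257 * exp (-π * μ ^ 2) := by
    have hsep : ((insert 0 s).erase 0 : Set A).Pairwise fun a b => μ ≤ dist (φ a) (φ b) :=
      fun a _ b _ hab => by simpa [dist_eq_norm] using hφ (a - b) (sub_ne_zero.2 hab)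
    have hnorm (a) (ha : a ∈ (insert 0 s).erase 0) : μ ≤ ‖φ a‖ := hφ a (ne_of_mem_erase ha)
    calc ∑ a ∈ s, exp (-π * ‖φ a‖ ^ 2) ≤ ∑ a ∈ insert 0 s, exp (-π * ‖φ a‖ ^ 2) :=
          sum_le_sum_of_subset_of_nonneg (subset_insert _ _) fun _ _ _ => (exp_pos _).le
    _ = 1 + ∑ a ∈ (insert 0 s).erase 0, exp (-π * ‖φ a‖ ^ 2) := by
          rw [← add_sum_erase _ _ (mem_insert_self 0 s)]; simp
    _ ≤ 1 + 257 * exp (-π * μ ^ 2) := by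
          gcongr; exact sum_exp_neg_pi_norm_sq_le hE _ φ hμ hsep hnorm
  have hnonneg : 0 ≤ fun a => exp (-π * ‖φ a‖ ^ 2) := fun _ => (exp_pos _).le
  exact ⟨summable_of_sum_le hnonneg hpartial, Real.tsum_le_of_sum_le hnonneg hpartial⟩

def arakelovEmbedding {F : Type*} [Field F] (σ σ' : F →+* ℂ) (u₁ u₂ : ℝ) :
    F →+ EuclideanSpace ℂ (Fin 2) where
  toFun x := !₂[(√2 * u₁ : ℝ) * σ x, (√2 * u₂ : ℝ) * σ' x]
  map_zero' := by ext i; fin_cases i <;> simp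
  map_add' x y := by ext i; fin_cases i <;> simp [mul_add]

theorem norm_arakelovEmbedding_sq {F : Type*} [Field F] (σ σ' : F →+* ℂ) (u₁ u₂ : ℝ) (x : F) :
    ‖arakelovEmbedding σ σ' u₁ u₂ x‖ ^ 2 = normSq2 σ σ' u₁ u₂ x := by
  rw [EuclideanSpace.norm_sq_eq]
  simp [arakelovEmbedding, normSq2, mul_pow]

theorem summable_and_k0_le {F : Type*} [Field F] [NumberField F] (σ σ' : F →+* ℂ)
    (I : FractionalIdeal (𝓞 F)⁰ F) (u₁ u₂ : ℝ) {μ : ℝ} (hμ : 2 ≤ μ)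
    (hI : ∀ x ∈ I, x ≠ 0 → μ ^ 2 ≤ normSq2 σ σ' u₁ u₂ x) :
    Summable (fun x : (I : Submodule (𝓞 F) F) => exp (-π * normSq2 σ σ' u₁ u₂ x)) ∧
      k0 σ σ' I u₁ u₂ ≤ 1 + 257 * exp (-π * μ ^ 2) := by
  have hE : finrank ℝ (EuclideanSpace ℂ (Fin 2)) = 4 := by
    rw [← finrank_mul_finrank ℝ ℂ]
    simp
  have := summable_exp_neg_pi_norm_sq_and_tsum_le hE
    ((arakelovEmbedding σ σ' u₁ u₂).comp (I : Submodule (𝓞 F) F).subtype.toAddMonoidHom) hμ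
    fun x hx => le_of_pow_le_pow_left₀ two_ne_zero (norm_nonneg _)
      ((hI x x.2 (by simpa using hx)).trans_eq (norm_arakelovEmbedding_sq σ σ' u₁ u₂ x).symm)
  simpa only [k0, AddMonoidHom.comp_apply, LinearMap.toAddMonoidHom_coe, Submodule.coe_subtype,
    norm_arakelovEmbedding_sq] using this

theorem one_add_two_mul_exp_le_k0_one {F : Type*} [Field F] [NumberField F] (σ σ' : F →+* ℂ)
    (hsum : Summable fun x : ((1 : FractionalIdeal (𝓞 F)⁰ F) : Submodule (𝓞 F) F) =>
      exp (-π * normSq2 σ σ' 1 1 x)) :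
    1 + 2 * exp (-π * 2 ^ 2) ≤ k0 σ σ' 1 1 1 := by
  classical
  let e : ((1 : FractionalIdeal (𝓞 F)⁰ F) : Submodule (𝓞 F) F) :=
    ⟨1, FractionalIdeal.one_mem_one _⟩
  have h0 : (0 : ((1 : FractionalIdeal (𝓞 F)⁰ F) : Submodule (𝓞 F) F)) ∉ ({e, -e} : Finset _) := by
    simp [Subtype.ext_iff, e]
  have he : e ∉ ({-e} : Finset _) := by
    simp [Subtype.ext_iff, e, eq_neg_iff_add_eq_zero, one_add_one_eq_two]
  calc 1 + 2 * exp (-π * 2 ^ 2) = ∑ x ∈ {0, e, -e}, exp (-π * normSq2 σ σ' 1 1 x) := by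
        rw [sum_insert h0, sum_insert he, sum_singleton]
        norm_num [e, normSq2, two_mul]
  _ ≤ k0 σ σ' 1 1 1 := hsum.sum_le_tsum _ fun _ _ => (exp_pos _).le

theorem NumberField.ComplexEmbedding.not_isReal_of_im_ne_zero {F : Type*} [Field F]
    {σ : F →+* ℂ} {x : F} (hx : (σ x).im ≠ 0) : ¬IsReal σ := fun hσ =>
  hx (by rw [← hσ.coe_embedding_apply]; exact Complex.ofReal_im _)

theorem NumberField.InfinitePlace.eq_or_eq_of_finrank_eq_four {F : Type*} [Field F]
    [NumberField F] (hF : finrank ℚ F = 4) {w w' : InfinitePlace F} (hww' : w ≠ w')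
    (hw : w.IsComplex) (hw' : w'.IsComplex) (v : InfinitePlace F) : v = w ∨ v = w' := by
  classical
  by_contra! hv
  have hle := sum_le_univ_sum_of_nonneg (s := {v, w, w'}) (f := mult) fun _ => Nat.zero_le _
  rw [sum_mult_eq, hF, sum_insert (by simp [hv.1, hv.2]), sum_pair hww',
    mult_isComplex ⟨w, hw⟩, mult_isComplex ⟨w', hw'⟩] at hle
  linarith [mult_pos (w := v)]

theorem absN_eq_abs_norm {F : Type*} [Field F] [NumberField F] (hF : finrank ℚ F = 4)
    {σ σ' : F →+* ℂ} (hplaces : InfinitePlace.mk σ ≠ InfinitePlace.mk σ')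
    (hσ : ¬ComplexEmbedding.IsReal σ) (hσ' : ¬ComplexEmbedding.IsReal σ') (x : F) :
    absN σ σ' x = |Algebra.norm ℚ x| := by
  classical
  have hw := InfinitePlace.isComplex_mk_iff.2 hσ
  have hw' := InfinitePlace.isComplex_mk_iff.2 hσ'
  have huniv : {InfinitePlace.mk σ, InfinitePlace.mk σ'} = univ := eq_univ_of_forall fun v => by
    rcases InfinitePlace.eq_or_eq_of_finrank_eq_four hF hplaces hw hw' v with rfl | rfl <;> simp
  rw [← InfinitePlace.prod_eq_abs_norm, ← huniv,
    prod_pair hplaces, InfinitePlace.mult_isComplex ⟨_, hw⟩, InfinitePlace.mult_isComplex ⟨_, hw'⟩]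
  rfl

namespace FractionalIdeal

variable {R K : Type*} [CommRing R] [IsDedekindDomain R] [Field K] [Algebra R K]
  [IsFractionRing R K] {I J : FractionalIdeal R⁰ K}

theorem exists_ne_bot_eq_mul_coeIdeal_of_le (hJ : J ≠ 0) (hJI : J ≤ I) :
    ∃ J₀ : Ideal R, J₀ ≠ ⊥ ∧ J = I * J₀ := by
  have hI : I ≠ 0 := ne_bot_of_le_ne_bot hJ hJI
  have hle : J * I⁻¹ ≤ 1 := (mul_le_mul_left hJI I⁻¹).trans_eq (mul_inv_cancel₀ hI)
  obtain ⟨J₀, hJ₀⟩ := le_one_iff_exists_coeIdeal.1 hle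
  have hJ_eq : J = I * J₀ := by rw [hJ₀, mul_comm J, ← mul_assoc, mul_inv_cancel₀ hI, one_mul]
  refine ⟨J₀, fun h => hJ ?_, hJ_eq⟩
  rw [hJ_eq, h, coeIdeal_bot, mul_zero]

variable [Module.Free ℤ R] [Module.Finite ℤ R]

theorem absNorm_le_absNorm_of_le (hJ : J ≠ 0) (hJI : J ≤ I) : absNorm I ≤ absNorm J := by
  obtain ⟨J₀, hJ₀, rfl⟩ := exists_ne_bot_eq_mul_coeIdeal_of_le hJ hJI
  have : (1 : ℚ) ≤ Ideal.absNorm J₀ := by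
    exact_mod_cast Nat.one_le_iff_ne_zero.2 (Ideal.absNorm_eq_zero_iff.not.2 hJ₀)
  rw [map_mul, coeIdeal_absNorm]
  nlinarith [absNorm_nonneg I]

theorem two_mul_absNorm_le_absNorm_of_lt (hJ : J ≠ 0) (hJI : J < I) :
    2 * absNorm I ≤ absNorm J := by
  obtain ⟨J₀, hJ₀, rfl⟩ := exists_ne_bot_eq_mul_coeIdeal_of_le hJ hJI.le
  have htop : J₀ ≠ ⊤ := fun h => hJI.ne (by rw [h, coeIdeal_top, mul_one])
  have : (2 : ℚ) ≤ Ideal.absNorm J₀ := by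
    have := Ideal.absNorm_eq_zero_iff.not.2 hJ₀
    have := Ideal.absNorm_eq_one_iff.not.2 htop
    norm_cast
    omega
  rw [map_mul, coeIdeal_absNorm]
  nlinarith [absNorm_nonneg I]

theorem absNorm_le_abs_norm_of_mem {F : Type*} [Field F] [NumberField F]
    {I : FractionalIdeal (𝓞 F)⁰ F} {x : F} (hx : x ∈ I) (hx0 : x ≠ 0) :
    absNorm I ≤ |Algebra.norm ℚ x| := by
  rw [← absNorm_span_singleton (𝓞 F)]
  exact absNorm_le_absNorm_of_le (spanSingleton_ne_zero_iff.2 hx0) (spanSingleton_le_iff_mem.2 hx)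

theorem two_mul_absNorm_le_abs_norm_of_mem {F : Type*} [Field F] [NumberField F]
    {I : FractionalIdeal (𝓞 F)⁰ F} {x : F} (hx : x ∈ I) (hx0 : x ≠ 0)
    (hxI : I ≠ spanSingleton (𝓞 F)⁰ x) : 2 * absNorm I ≤ |Algebra.norm ℚ x| := by
  rw [← absNorm_span_singleton (𝓞 F)]
  exact two_mul_absNorm_le_absNorm_of_lt (spanSingleton_ne_zero_iff.2 hx0)
    ((spanSingleton_le_iff_mem.2 hx).lt_of_ne hxI.symm)

end FractionalIdeal

theorem four_mul_sqrt_le_normSq2 {F : Type*} [Field F] (σ σ' : F →+* ℂ) {u₁ u₂ c N : ℝ}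
    (hu₁ : 0 < u₁) (hu₂ : 0 < u₂) (hdeg : u₁ ^ 2 * u₂ ^ 2 * N = 1) {x : F}
    (hx : c * N ≤ absN σ σ' x) : 4 * √c ≤ normSq2 σ σ' u₁ u₂ x := by
  have hN : 0 < N := pos_of_mul_pos_right (hdeg ▸ one_pos) (by positivity)
  have hscale : u₁ * u₂ * √N = 1 := by
    rw [← pow_eq_one_iff_of_nonneg (by positivity) two_ne_zero, mul_pow, mul_pow,
      Real.sq_sqrt hN.le, hdeg]
  have hsqrt : √c * √N ≤ ‖σ x‖ * ‖σ' x‖ := by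
    rw [← Real.sqrt_mul' _ hN.le, absN, ← mul_pow] at *
    exact Real.sqrt_le_iff.2 ⟨by positivity, hx⟩
  calc 4 * √c = 4 * u₁ * u₂ * (√c * √N) := by linear_combination (-4 * √c) * hscale
  _ ≤ 4 * u₁ * u₂ * (‖σ x‖ * ‖σ' x‖) := by gcongr
  _ ≤ normSq2 σ σ' u₁ u₂ x := by
    rw [normSq2]; nlinarith [sq_nonneg (u₁ * ‖σ x‖ - u₂ * ‖σ' x‖)]

theorem mul_exp_neg_pi_sqrt_four_mul_sqrt_two_sq_lt :
    257 * exp (-π * √(4 * √2) ^ 2) < 2 * exp (-π * 2 ^ 2) := by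
  rw [Real.sq_sqrt (by positivity)]
  have hsqrt2 : 1.41 ≤ √2 := Real.le_sqrt_of_sq_le (by norm_num)
  have hgap : 5 ≤ π * (4 * √2 - 4) := by nlinarith [Real.pi_gt_d2]
  have hexp5 : 143 ≤ exp 5 :=
    calc (143 : ℝ) ≤ 2.7 ^ 5 := by norm_num
    _ ≤ exp 1 ^ 5 := by gcongr; linarith [Real.exp_one_gt_d9]
    _ = exp 5 := by rw [← exp_nat_mul]; norm_num
  have hsplit : exp (-π * 2 ^ 2) = exp (-π * (4 * √2)) * exp (π * (4 * √2 - 4)) := by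
    rw [← exp_add]; ring_nf
  rw [hsplit]
  nlinarith [exp_pos (-π * (4 * √2)), exp_le_exp.2 hgap]

theorem stmt6_general
    (F K : Type*) [Field F] [NumberField F] [Field K]
    [Algebra K F]
    (hquartic : Module.finrank ℚ F = 4)
    (hKim : ∀ φ : K →+* ℂ, ∃ x, (φ x).im ≠ 0)
    (σ σ' : F →+* ℂ)
    (hplaces : InfinitePlace.mk σ ≠ InfinitePlace.mk σ')
    (I : FractionalIdeal (𝓞 F)⁰ F)
    (hnp : ∀ f : F, I ≠ FractionalIdeal.spanSingleton (𝓞 F)⁰ f)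
    (u₁ u₂ : ℝ) (hu₁ : 0 < u₁) (hu₂ : 0 < u₂)
    (hdeg : u₁ ^ 2 * u₂ ^ 2 * (FractionalIdeal.absNorm I : ℝ) = 1) :
    k0 σ σ' I u₁ u₂ < k0 σ σ' 1 1 1 := by
  have hcomplex (τ : F →+* ℂ) : ¬ComplexEmbedding.IsReal τ :=
    have ⟨x, hx⟩ := hKim (τ.comp (algebraMap K F))
    ComplexEmbedding.not_isReal_of_im_ne_zero hx
  have habsN := absN_eq_abs_norm hquartic hplaces (hcomplex σ) (hcomplex σ')
  have hI (x) (hx : x ∈ I) (hx0 : x ≠ 0) : √(4 * √2) ^ 2 ≤ normSq2 σ σ' u₁ u₂ x := by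
    rw [Real.sq_sqrt (by positivity)]
    refine four_mul_sqrt_le_normSq2 σ σ' hu₁ hu₂ hdeg ?_
    rw [habsN]
    exact_mod_cast FractionalIdeal.two_mul_absNorm_le_abs_norm_of_mem hx hx0 (hnp x)
  have hO (x) (hx : x ∈ (1 : FractionalIdeal (𝓞 F)⁰ F)) (hx0 : x ≠ 0) :
      2 ^ 2 ≤ normSq2 σ σ' 1 1 x := by
    refine (by norm_num : (2 : ℝ) ^ 2 = 4 * √1).trans_le
      (four_mul_sqrt_le_normSq2 σ σ' one_pos one_pos (N := 1) (by norm_num) ?_)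
    rw [one_mul, habsN]
    exact_mod_cast FractionalIdeal.absNorm_one (R := 𝓞 F) (K := F) ▸
      FractionalIdeal.absNorm_le_abs_norm_of_mem hx hx0
  have hμ : 2 ≤ √(4 * √2) := Real.le_sqrt_of_sq_le (by nlinarith [Real.one_lt_sqrt_two])
  calc k0 σ σ' I u₁ u₂ ≤ 1 + 257 * exp (-π * √(4 * √2) ^ 2) :=
        (summable_and_k0_le σ σ' I u₁ u₂ hμ hI).2
  _ < 1 + 2 * exp (-π * 2 ^ 2) := by
        linarith [mul_exp_neg_pi_sqrt_four_mul_sqrt_two_sq_lt]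
  _ ≤ k0 σ σ' 1 1 1 :=
        one_add_two_mul_exp_le_k0_one σ σ' (summable_and_k0_le σ σ' 1 1 1 le_rfl hO).1

/-- If the class of the degree-zero Arakelov divisor `D = (I, u)` is not on `𝕋⁰`
(`I` non-principal), then `k⁰(D) < k⁰(D₀)`. -/
theorem stmt6
    (F K : Type*) [Field F] [NumberField F] [Field K] [NumberField K]
    [Algebra K F] [IsScalarTower ℚ K F]
    (hquartic : Module.finrank ℚ F = 4)
    (hquad : Module.finrank K F = 2)
    (hKim : ∀ φ : K →+* ℂ, ∃ x, (φ x).im ≠ 0)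
    (σ σ' : F →+* ℂ)
    (hplaces : InfinitePlace.mk σ ≠ InfinitePlace.mk σ')
    (I : FractionalIdeal (𝓞 F)⁰ F)
    (hnp : ∀ f : F, I ≠ FractionalIdeal.spanSingleton (𝓞 F)⁰ f)
    (u₁ u₂ : ℝ) (hu₁ : 0 < u₁) (hu₂ : 0 < u₂)
    (hdeg : u₁ ^ 2 * u₂ ^ 2 * (FractionalIdeal.absNorm I : ℝ) = 1) :
    k0 σ σ' I u₁ u₂ < k0 σ σ' 1 1 1 :=
  stmt6_general F K hquartic hKim σ σ' hplaces I hnp u₁ u₂ hu₁ hu₂ hdeg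
end
end

section
/- Let x be a unit of O_F (so that N(x) = 1). Then for every s ∈ [0.98, 1/0.98]: if e^{0.54/2} ≤ |σ(x)| ≤ 1 + √2 then G(s,x) > 0, and if |σ(x)| = 1 then G(s,x) < 0. -/
open NumberField nonZeroDivisors MeasureTheory

noncomputable section

/-- `G(s, x) = (π‖ux‖⁴ − 16π N(x) − ‖ux‖²/2 − 2N(x)/(s²|σ(x)|²)) e^{−π‖ux‖²}` with `u = (s, 1/s)`. -/
def Gfun {F : Type*} [Field F] [NumberField F] (σ σ' : F →+* ℂ) (s : ℝ) (x : 𝓞 F) : ℝ :=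
  (Real.pi * normSq2 σ σ' s (1 / s) (x : F) ^ 2 - 16 * Real.pi * absN σ σ' (x : F)
      - normSq2 σ σ' s (1 / s) (x : F) / 2
      - 2 * absN σ σ' (x : F) / (s ^ 2 * ‖σ (x : F)‖ ^ 2))
    * Real.exp (-Real.pi * normSq2 σ σ' s (1 / s) (x : F))

set_option maxHeartbeats 2000000 in
theorem stmt14
    (F K : Type*) [Field F] [NumberField F] [Field K] [NumberField K]
    [Algebra K F] [IsScalarTower ℚ K F]
    (hquartic : Module.finrank ℚ F = 4)
    (hquad : Module.finrank K F = 2)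
    (hKim : ∀ φ : K →+* ℂ, ∃ x, (φ x).im ≠ 0)
    (σ σ' : F →+* ℂ)
    (hplaces : InfinitePlace.mk σ ≠ InfinitePlace.mk σ')
    (x : 𝓞 F) (hx : IsUnit x) :
    ∀ s ∈ Set.Icc (0.98 : ℝ) (1 / 0.98),
      (Real.exp (0.54 / 2) ≤ ‖σ (x : F)‖ →
        ‖σ (x : F)‖ ≤ 1 + Real.sqrt 2 → 0 < Gfun σ σ' s x) ∧
      (‖σ (x : F)‖ = 1 → Gfun σ σ' s x < 0) := by
  classical
  have key : ‖σ (x : F)‖ ^ 2 * ‖σ' (x : F)‖ ^ 2 = 1 := by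
    have hnoreal : ∀ w : InfinitePlace F, ¬ w.IsReal := by
      rintro w ⟨φ, hφ, -⟩
      have hcomp : ComplexEmbedding.IsReal (φ.comp (algebraMap K F)) := hφ.comp _
      obtain ⟨y, hy⟩ := hKim (φ.comp (algebraMap K F))
      apply hy
      have := RingHom.congr_fun hcomp y
      rwa [ComplexEmbedding.conjugate_coe_eq, Complex.conj_eq_iff_im] at this
    have hnr : InfinitePlace.nrRealPlaces F = 0 :=
      Fintype.card_eq_zero_iff.mpr ⟨fun ⟨w, hw⟩ => hnoreal w hw⟩
    have hrank := InfinitePlace.card_add_two_mul_card_eq_rank F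
    rw [hnr, hquartic] at hrank
    have hcard : Fintype.card (InfinitePlace F) = 2 := by
      rw [InfinitePlace.card_eq_nrRealPlaces_add_nrComplexPlaces, hnr]
      omega
    have huniv : (Finset.univ : Finset (InfinitePlace F)) =
        {InfinitePlace.mk σ, InfinitePlace.mk σ'} := by
      symm
      apply Finset.eq_univ_of_card
      rw [Finset.card_pair hplaces, hcard]
    have hmult : ∀ w : InfinitePlace F, w.mult = 2 := by
      intro w
      simp [InfinitePlace.mult, hnoreal w]
    have hnorm : |Algebra.norm ℚ (x : F)| = 1 := by
      have := NumberField.Units.norm (K := F) hx.unit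
      rwa [hx.unit_spec] at this
    have hprod := InfinitePlace.prod_eq_abs_norm (K := F) (x : F)
    rw [huniv, hnorm] at hprod
    rw [Finset.prod_insert (by simpa using hplaces), Finset.prod_singleton,
      hmult, hmult, InfinitePlace.apply, InfinitePlace.apply] at hprod
    exact_mod_cast hprod
  intro s hs
  obtain ⟨hs1, hs2⟩ := hs
  have hs0 : (0 : ℝ) < s := by linarith
  set a := ‖σ (x : F)‖ with ha_def
  set b := ‖σ' (x : F)‖ with hb_def
  have hann : 0 ≤ a := norm_nonneg _
  have ha0 : 0 < a := by
    rcases hann.lt_or_eq with h | h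
    · exact h
    · exfalso
      rw [← h] at key
      norm_num at key
  have hsne : s ≠ 0 := ne_of_gt hs0
  have hane : a ≠ 0 := ne_of_gt ha0
  have hb2 : b ^ 2 = 1 / a ^ 2 := by
    field_simp
    linear_combination key
  set t := s ^ 2 * a ^ 2 with ht_def
  have ht0 : 0 < t := by positivity
  have htne : t ≠ 0 := ne_of_gt ht0
  have hQ : normSq2 σ σ' s (1 / s) (x : F) = 2 * t + 2 / t := by
    simp only [normSq2, ← ha_def, ← hb_def]
    rw [hb2, ht_def]
    field_simp
  have habsN : absN σ σ' (x : F) = 1 := by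
    simp only [absN, ← ha_def, ← hb_def]
    exact key
  have hG : Gfun σ σ' s x =
      (4 * Real.pi * (t ^ 2 - 1) ^ 2 - t ^ 3 - 3 * t) / t ^ 2 *
        Real.exp (-Real.pi * (2 * t + 2 / t)) := by
    simp only [Gfun, ← ha_def]
    rw [hQ, habsN]
    congr 1
    rw [ht_def]
    field_simp
    ring
  have hss : (0.9604 : ℝ) ≤ s ^ 2 := by nlinarith
  have hss2 : s ^ 2 ≤ 1.0413 := by nlinarith
  have hπ1 : (3.14 : ℝ) ≤ Real.pi := by linarith [Real.pi_gt_d6]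
  have hπ2 : Real.pi ≤ 3.15 := by linarith [Real.pi_lt_d2]
  constructor
  · intro hlow hhigh
    rw [hG]
    apply mul_pos _ (Real.exp_pos _)
    apply div_pos _ (by positivity)
    have hsqrt : Real.sqrt 2 ≤ 1.5 := by
      nlinarith [Real.sq_sqrt (by norm_num : (0:ℝ) ≤ 2), Real.sqrt_nonneg 2]
    have hexp : (1.27 : ℝ) ≤ a := le_trans (by linarith [Real.add_one_le_exp (0.54 / 2)]) hlow
    have ha_hi : a ≤ 2.5 := by linarith
    have ha2 : (1.61 : ℝ) ≤ a ^ 2 := by nlinarith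
    have ha2h : a ^ 2 ≤ 6.25 := by nlinarith
    have ht1 : (1.54 : ℝ) ≤ t := by
      have := mul_le_mul hss ha2 (by norm_num) (by positivity)
      rw [ht_def]
      nlinarith
    have ht2 : t ≤ 6.52 := by
      have := mul_le_mul hss2 ha2h (sq_nonneg a) (by norm_num)
      rw [ht_def]
      nlinarith
    nlinarith [sq_nonneg (t - 1.54), sq_nonneg (t ^ 2 - 2.37), sq_nonneg (t - 6.52), sq_nonneg t,
      mul_nonneg (sub_nonneg.2 ht1) (sub_nonneg.2 ht1)]
  · intro h1
    rw [hG]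
    apply mul_neg_of_neg_of_pos _ (Real.exp_pos _)
    apply div_neg_of_neg_of_pos _ (by positivity)
    have ht1 : (0.9604 : ℝ) ≤ t := by
      rw [ht_def, h1]
      nlinarith
    have ht2 : t ≤ 1.0413 := by
      rw [ht_def, h1]
      nlinarith
    have h2 : t ^ 2 ≤ 1.0844 := by nlinarith
    have h3 : (0.92 : ℝ) ≤ t ^ 2 := by nlinarith
    have hu : (t ^ 2 - 1) ^ 2 ≤ 0.0072 := by
      nlinarith [mul_nonneg (sub_nonneg.2 h3) (sub_nonneg.2 h2)]
    nlinarith [mul_le_mul hπ2 hu (sq_nonneg _) (by norm_num : (0:ℝ) ≤ 3.15)]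
end
end
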